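/- arXiv:2512.15975 — 5 statements merged into one kernel-verified Lean document; each statement's English description precedes it below -/
import Mathlib

section
/- Let (X,d) be a uniformly discrete metric space and let f : X → X and a constant c with 0 ≤ c < 1/2 satisfy d(fx,fy) ≤ c · max{d(x,y), d(x,fx), d(y,fy), d(x,fy), d(y,fx)} for all x,y ∈ X. Then f has a unique fixed point in X. -/
/-! A quasi-contraction with constant `c < 1/2` moves every point `f y` at most `c / (1 - c) < 1`
times as far as it moves `y`, because each of the five distances in the maximum for the pair
`(y, f y)` is bounded by `d(y, f y) + d(f y, f (f y))`. Hence the displacements along an orbit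
decrease geometrically; in a uniformly discrete space a displacement smaller than the
discreteness constant vanishes, giving a fixed point. Two fixed points `u, v` satisfy
`d(u, v) ≤ c d(u, v)`, so they coincide. -/

open Function

def IsQuasiContraction {X : Type*} [PseudoMetricSpace X] (c : ℝ) (f : X → X) : Prop :=
  ∀ x y : X, dist (f x) (f y) ≤
    c * max (dist x y) (max (dist x (f x)) (max (dist y (f y))
      (max (dist x (f y)) (dist y (f x)))))

section Orbit

variable {X : Type*} [PseudoMetricSpace X] {f : X → X} {r : ℝ}

theorem dist_iterate_apply_le_pow_mul (hr : 0 ≤ r)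
    (hstep : ∀ y, dist (f y) (f (f y)) ≤ r * dist y (f y)) (x : X) (n : ℕ) :
    dist (f^[n] x) (f (f^[n] x)) ≤ r ^ n * dist x (f x) := by
  induction n with
  | zero => simp
  | succ n ih =>
    rw [iterate_succ_apply']
    calc dist (f (f^[n] x)) (f (f (f^[n] x))) ≤ r * dist (f^[n] x) (f (f^[n] x)) := hstep _
      _ ≤ r * (r ^ n * dist x (f x)) := mul_le_mul_of_nonneg_left ih hr
      _ = r ^ (n + 1) * dist x (f x) := by ring

theorem exists_dist_apply_lt [Nonempty X] (hr0 : 0 ≤ r) (hr1 : r < 1)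
    (hstep : ∀ y, dist (f y) (f (f y)) ≤ r * dist y (f y)) {δ : ℝ} (hδ : 0 < δ) :
    ∃ x, dist x (f x) < δ := by
  obtain ⟨x⟩ := ‹Nonempty X›
  have hlim : Filter.Tendsto (fun n : ℕ => r ^ n * dist x (f x)) Filter.atTop (nhds 0) := by
    simpa using (tendsto_pow_atTop_nhds_zero_of_lt_one hr0 hr1).mul_const (dist x (f x))
  obtain ⟨n, hn⟩ := (hlim.eventually (gt_mem_nhds hδ)).exists
  exact ⟨f^[n] x, (dist_iterate_apply_le_pow_mul hr0 hstep x n).trans_lt hn⟩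

end Orbit

theorem exists_isFixedPt_of_uniformlyDiscrete {X : Type*} [PseudoMetricSpace X] {f : X → X}
    (hud : ∃ ε > (0 : ℝ), ∀ x y : X, dist x y < ε → x = y)
    (happrox : ∀ δ > (0 : ℝ), ∃ x, dist x (f x) < δ) : ∃ x, IsFixedPt f x := by
  obtain ⟨ε, hε, hdisc⟩ := hud
  obtain ⟨x, hx⟩ := happrox ε hε
  exact ⟨x, (hdisc x (f x) hx).symm⟩

namespace IsQuasiContraction

variable {X : Type*} {c : ℝ} {f : X → X}

theorem dist_apply_apply_le [PseudoMetricSpace X] (hf : IsQuasiContraction c f) (hc0 : 0 ≤ c)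
    (hc : c < 1) (y : X) : dist (f y) (f (f y)) ≤ c / (1 - c) * dist y (f y) := by
  set a := dist y (f y)
  set b := dist (f y) (f (f y))
  have hmax : max a (max a (max b (max (dist y (f (f y))) (dist (f y) (f y))))) ≤ a + b := by
    have : dist y (f (f y)) ≤ a + b := dist_triangle _ _ _
    simp only [max_le_iff, dist_self]
    refine ⟨?_, ?_, ?_, this, ?_⟩ <;> linarith [dist_nonneg (x := y) (y := f y),
      dist_nonneg (x := f y) (y := f (f y))]
  have hb : b ≤ c * (a + b) := (hf y (f y)).trans (mul_le_mul_of_nonneg_left hmax hc0)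
  rw [div_mul_eq_mul_div, le_div_iff₀ (by linarith)]
  linarith

theorem eq_of_isFixedPt [MetricSpace X] (hf : IsQuasiContraction c f) (hc : c < 1) {u v : X}
    (hu : IsFixedPt f u) (hv : IsFixedPt f v) : u = v := by
  have huv : dist u v ≤ c * dist u v := by
    simpa [hu.eq, hv.eq, dist_comm v u] using hf u v
  exact dist_le_zero.mp (by nlinarith [dist_nonneg (x := u) (y := v)])

end IsQuasiContraction

theorem quasi_contraction_fixed_point
    {X : Type*} [MetricSpace X] [Nonempty X]
    (hud : ∃ ε > (0 : ℝ), ∀ x y : X, dist x y < ε → x = y)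
    (f : X → X) (c : ℝ) (hc0 : 0 ≤ c) (hc : c < 1 / 2)
    (h : ∀ x y : X, dist (f x) (f y) ≤
      c * max (dist x y) (max (dist x (f x)) (max (dist y (f y))
        (max (dist x (f y)) (dist y (f x)))))) :
    ∃! x : X, f x = x := by
  have hf : IsQuasiContraction c f := h
  have hr0 : 0 ≤ c / (1 - c) := div_nonneg hc0 (by linarith)
  have hr1 : c / (1 - c) < 1 := (div_lt_one (by linarith)).2 (by linarith)
  obtain ⟨x, hx⟩ := exists_isFixedPt_of_uniformlyDiscrete hud fun _ hδ =>
    exists_dist_apply_lt hr0 hr1 (hf.dist_apply_apply_le hc0 (by linarith)) hδ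
  exact ⟨x, hx, fun y hy => hf.eq_of_isFixedPt (by linarith) hy hx⟩
end

section
/- Let (X,d) be a uniformly discrete nonempty metric space and f : X → X satisfying, for nonnegative constants a, b with a + b < 1/2, the inequality d(fx,fy) ≤ a·[d(x,fx) + d(y,fy)] + b·[d(x,fy) + d(y,fx)] for all x,y ∈ X. Then f has a unique fixed point in X. -/
/-!
Taking `y = f x` in the contractive condition and using the triangle inequality gives
`d(f x, f² x) ≤ k · d(x, f x)` with `k = (a + b) / (1 - a - b) < 1`, so the displacements along an
orbit decay geometrically and eventually drop below the discreteness radius `ε`, which forces a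
fixed point. For two fixed points the condition reads `d(x, y) ≤ 2b · d(x, y)` with `2b < 1`.
-/

open Function

section

variable {X : Type*} [MetricSpace X]

def IsKannanChatterjea (f : X → X) (a b : ℝ) : Prop :=
  ∀ x y : X, dist (f x) (f y) ≤
    a * (dist x (f x) + dist y (f y)) + b * (dist x (f y) + dist y (f x))

namespace IsKannanChatterjea

variable {f : X → X} {a b : ℝ}

theorem dist_apply_apply_le (h : IsKannanChatterjea f a b) (hb : 0 ≤ b) (hab : a + b < 1)
    (x : X) : dist (f x) (f (f x)) ≤ (a + b) / (1 - a - b) * dist x (f x) := by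
  have hcond := h x (f x)
  have htri : dist x (f (f x)) ≤ dist x (f x) + dist (f x) (f (f x)) := dist_triangle _ _ _
  rw [dist_self, add_zero] at hcond
  rw [div_mul_eq_mul_div, le_div_iff₀ (by linarith)]
  nlinarith

theorem eq_of_isFixedPt (h : IsKannanChatterjea f a b) (hb : b < 1 / 2) {x y : X}
    (hx : IsFixedPt f x) (hy : IsFixedPt f y) : x = y := by
  have hcond := h x y
  rw [hx.eq, hy.eq, dist_self, dist_self, dist_comm y x] at hcond
  exact dist_le_zero.mp (by nlinarith [dist_nonneg (x := x) (y := y)])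

end IsKannanChatterjea

theorem exists_dist_self_apply_le_pow_mul {f : X → X} {k : ℝ} (hk : 0 ≤ k)
    (hstep : ∀ x, dist (f x) (f (f x)) ≤ k * dist x (f x)) (x₀ : X) :
    ∀ n : ℕ, ∃ x, dist x (f x) ≤ k ^ n * dist x₀ (f x₀)
  | 0 => ⟨x₀, by rw [pow_zero, one_mul]⟩
  | n + 1 => by
    obtain ⟨x, hx⟩ := exists_dist_self_apply_le_pow_mul hk hstep x₀ n
    refine ⟨f x, (hstep x).trans ?_⟩
    rw [pow_succ', mul_assoc]
    exact mul_le_mul_of_nonneg_left hx hk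

theorem exists_isFixedPt_of_uniformlyDiscrete_s5 [Nonempty X] {ε : ℝ} (hε : 0 < ε)
    (hud : ∀ x y : X, dist x y < ε → x = y) {f : X → X} {k : ℝ} (hk₀ : 0 ≤ k) (hk₁ : k < 1)
    (hstep : ∀ x, dist (f x) (f (f x)) ≤ k * dist x (f x)) : ∃ x, IsFixedPt f x := by
  obtain ⟨x₀⟩ := ‹Nonempty X›
  have hdecay : Filter.Tendsto (fun n : ℕ ↦ k ^ n * dist x₀ (f x₀)) Filter.atTop (nhds 0) := by
    simpa using (tendsto_pow_atTop_nhds_zero_of_lt_one hk₀ hk₁).mul_const (dist x₀ (f x₀))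
  obtain ⟨n, hn⟩ := (hdecay.eventually (gt_mem_nhds hε)).exists
  obtain ⟨x, hx⟩ := exists_dist_self_apply_le_pow_mul hk₀ hstep x₀ n
  exact ⟨x, (hud x (f x) (hx.trans_lt hn)).symm⟩

end

theorem kannan_chatterjea_fixed_point
    {X : Type*} [MetricSpace X] [Nonempty X]
    (hud : ∃ ε > (0 : ℝ), ∀ x y : X, dist x y < ε → x = y)
    (f : X → X) (a b : ℝ) (ha : 0 ≤ a) (hb : 0 ≤ b) (hab : a + b < 1 / 2)
    (h : ∀ x y : X, dist (f x) (f y) ≤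
      a * (dist x (f x) + dist y (f y)) + b * (dist x (f y) + dist y (f x))) :
    ∃! x : X, f x = x := by
  obtain ⟨ε, hε, hud⟩ := hud
  have hk₀ : 0 ≤ (a + b) / (1 - a - b) := div_nonneg (by linarith) (by linarith)
  have hk₁ : (a + b) / (1 - a - b) < 1 := by rw [div_lt_one (by linarith)]; linarith
  obtain ⟨x, hx⟩ := exists_isFixedPt_of_uniformlyDiscrete_s5 hε hud hk₀ hk₁
    (IsKannanChatterjea.dist_apply_apply_le h hb (by linarith))
  exact ⟨x, hx, fun y hy ↦ IsKannanChatterjea.eq_of_isFixedPt h (by linarith) hy hx⟩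
end

section
/- Let (X,d) be a uniformly discrete nonempty metric space. Let f : X → X be such that for some nonnegative constants a, b, c with b + c < 1, for all x,y ∈ X with x ≠ y, d(fx,fy) + a·d(y,fx) ≤ b·(d(x,fx)·d(x,fx))/d(x,y) + c·d(x,y). Then f has a unique fixed point. -/
/-!
Taking `y = f x` in the contraction inequality kills the `a`-term and the denominator, leaving
`d(f x, f² x) ≤ (b + c) d(x, f x)`. Hence consecutive distances along any orbit decay
geometrically, and uniform discreteness forces two consecutive iterates to coincide, which is a
fixed point. Two distinct fixed points `p, q` would give `(1 + a) d(p, q) ≤ c d(p, q)`.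
-/

open Filter Function

section

variable {X : Type*} [MetricSpace X]

def IsRationalTypeContraction (f : X → X) (a b c : ℝ) : Prop :=
  ∀ x y : X, x ≠ y →
    dist (f x) (f y) + a * dist y (f x) ≤
      b * (dist x (f x) * dist x (f x)) / dist x y + c * dist x y

theorem dist_iterate_succ_le_pow_mul {f : X → X} {k : ℝ} (hk : 0 ≤ k)
    (hf : ∀ x, dist (f x) (f (f x)) ≤ k * dist x (f x)) (x : X) (n : ℕ) :
    dist (f^[n] x) (f^[n + 1] x) ≤ k ^ n * dist x (f x) := by
  induction n with
  | zero => simp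
  | succ n ih =>
    calc dist (f^[n + 1] x) (f^[n + 2] x)
        = dist (f (f^[n] x)) (f (f (f^[n] x))) := by
          simp only [iterate_succ_apply']
      _ ≤ k * dist (f^[n] x) (f^[n + 1] x) := by
          rw [iterate_succ_apply' f n]; exact hf _
      _ ≤ k * (k ^ n * dist x (f x)) := mul_le_mul_of_nonneg_left ih hk
      _ = k ^ (n + 1) * dist x (f x) := by ring

theorem exists_isFixedPt_iterate_of_uniformlyDiscrete {ε : ℝ} (hε : 0 < ε)
    (hud : ∀ x y : X, dist x y < ε → x = y) {f : X → X} {k : ℝ} (hk₀ : 0 ≤ k) (hk₁ : k < 1)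
    (hf : ∀ x, dist (f x) (f (f x)) ≤ k * dist x (f x)) (x : X) :
    ∃ n, IsFixedPt f (f^[n] x) := by
  have hlim : Tendsto (fun n : ℕ => k ^ n * dist x (f x)) atTop (nhds 0) := by
    simpa using (tendsto_pow_atTop_nhds_zero_of_lt_one hk₀ hk₁).mul_const (dist x (f x))
  obtain ⟨n, hn⟩ := (hlim.eventually (eventually_lt_nhds hε)).exists
  exact ⟨n, (iterate_succ_apply' f n x).symm.trans
    (hud _ _ ((dist_iterate_succ_le_pow_mul hk₀ hf x n).trans_lt hn)).symm⟩

namespace IsRationalTypeContraction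

variable {f : X → X} {a b c : ℝ}

theorem dist_apply_apply_le (hf : IsRationalTypeContraction f a b c) (x : X) :
    dist (f x) (f (f x)) ≤ (b + c) * dist x (f x) := by
  by_cases hx : x = f x
  · simp [← hx]
  · have key := hf x (f x) hx
    rw [dist_self, mul_zero, add_zero, mul_div_assoc, mul_self_div_self] at key
    linarith

theorem eq_of_isFixedPt (hf : IsRationalTypeContraction f a b c) (ha : 0 ≤ a) (hc : c < 1)
    {p q : X} (hp : IsFixedPt f p) (hq : IsFixedPt f q) : p = q := by
  by_contra hpq
  have key := hf p q hpq
  simp only [hp.eq, hq.eq, dist_self, mul_zero, zero_div, zero_add, dist_comm q p] at key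
  nlinarith [dist_pos.mpr hpq]

end IsRationalTypeContraction

end

theorem rational_type_contraction_fixed_point
    {X : Type*} [MetricSpace X] [Nonempty X]
    (hud : ∃ ε > (0 : ℝ), ∀ x y : X, dist x y < ε → x = y)
    (f : X → X) (a b c : ℝ) (ha : 0 ≤ a) (hb : 0 ≤ b) (hc : 0 ≤ c)
    (hbc : b + c < 1)
    (h : ∀ x y : X, x ≠ y →
      dist (f x) (f y) + a * dist y (f x) ≤
        b * (dist x (f x) * dist x (f x)) / dist x y + c * dist x y) :
    ∃! x : X, f x = x := by
  obtain ⟨ε, hε, hud⟩ := hud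
  have hf : IsRationalTypeContraction f a b c := h
  obtain ⟨n, hfix⟩ := exists_isFixedPt_iterate_of_uniformlyDiscrete hε hud (by positivity) hbc
    hf.dist_apply_apply_le (Classical.arbitrary X)
  exact ⟨_, hfix, fun y hy => hf.eq_of_isFixedPt ha (by linarith) hy hfix⟩
end

section
/- Let X = {0, 1} ⊂ ℤ with d(x,y) = |x − y|, and T : X → X defined by T(x) = 1 − x. Then with k₁ = 0, k₂ = √0.9, k₃ = 0.3, we have k₁² + k₂² + k₃² < 1 and d(Ta,Tb) ≤ k₁²·d(a,b) + k₂²·[d(a,Ta) + d(b,Tb)] + k₃²·√(d(a,b)·min{d(a,Ta), d(b,Tb)}) for all a,b ∈ X, yet T has no fixed point. -/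
lemma dist_le_one_of_mem_zero_one {a b : ℤ} (ha : a ∈ ({0, 1} : Set ℤ))
    (hb : b ∈ ({0, 1} : Set ℤ)) : dist a b ≤ 1 := by
  rcases ha with rfl | rfl <;> rcases hb with rfl | rfl <;> norm_num [Int.dist_eq]

lemma dist_one_sub_self_of_mem_zero_one {a : ℤ} (ha : a ∈ ({0, 1} : Set ℤ)) :
    dist a (1 - a) = 1 := by
  rcases ha with rfl | rfl <;> norm_num [Int.dist_eq]

lemma Int.one_sub_ne_self (x : ℤ) : 1 - x ≠ x := by
  omega

theorem counterexample_rational_sqrt_contraction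
    (T : ({0, 1} : Set ℤ) → ({0, 1} : Set ℤ))
    (hT : ∀ x, (T x : ℤ) = 1 - (x : ℤ)) :
    (0 : ℝ) ^ 2 + Real.sqrt 0.9 ^ 2 + (0.3 : ℝ) ^ 2 < 1 ∧
    (∀ a b, dist (T a) (T b) ≤
      (0 : ℝ) ^ 2 * dist a b +
      Real.sqrt 0.9 ^ 2 * (dist a (T a) + dist b (T b)) +
      (0.3 : ℝ) ^ 2 * Real.sqrt (dist a b * min (dist a (T a)) (dist b (T b)))) ∧
    (∀ x, T x ≠ x) := by
  have hk₂ : Real.sqrt 0.9 ^ 2 = 0.9 := Real.sq_sqrt (by norm_num)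
  have hdisplace (a : ({0, 1} : Set ℤ)) : dist a (T a) = 1 := by
    rw [Subtype.dist_eq, hT]
    exact dist_one_sub_self_of_mem_zero_one a.2
  refine ⟨by rw [hk₂]; norm_num, fun a b => ?_, fun x hx => ?_⟩
  · -- every displacement is 1, so the right-hand side is at least 0.9 * 2, above the diameter 1
    have hdiam : dist (T a) (T b) ≤ 1 := dist_le_one_of_mem_zero_one (T a).2 (T b).2
    rw [hk₂, hdisplace a, hdisplace b]
    have hsqrt := Real.sqrt_nonneg (dist a b * min 1 1)
    linarith
  · exact Int.one_sub_ne_self x ((hT x).symm.trans (congrArg Subtype.val hx))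
end

section
/- Let (X,d) be a metric space and f : X → X satisfy, for nonnegative constants a, b with a + b < 1/2, d(fx,fy) ≤ a·[d(x,fx) + d(y,fy)] + b·[d(x,fy) + d(y,fx)] for all x,y. Then for any x₀ ∈ X, the orbit x_{n+1} = f(x_n) satisfies d(x_{n+1}, x_{n+2}) ≤ ((a+b)/(1−(a+b)))·d(x_n, x_{n+1}) for all n. -/
/-!
Apply the contraction condition to the pair `(x, f x)`: the term `d(f x, f x)` vanishes and the
remaining cross term `d(x, f² x)` is at most `d(x, f x) + d(f x, f² x)` by the triangle inequality,
so `d(f x, f² x) ≤ (a + b) (d(x, f x) + d(f x, f² x))`; solve for `d(f x, f² x)`.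
-/

def KannanChatterjeaWith {X : Type*} [MetricSpace X] (a b : ℝ) (f : X → X) : Prop :=
  ∀ x y : X, dist (f x) (f y) ≤
    a * (dist x (f x) + dist y (f y)) + b * (dist x (f y) + dist y (f x))

namespace KannanChatterjeaWith

variable {X : Type*} [MetricSpace X] {a b : ℝ} {f : X → X}

theorem one_sub_mul_dist_apply_apply_le (hb : 0 ≤ b) (hf : KannanChatterjeaWith a b f) (x : X) :
    (1 - (a + b)) * dist (f x) (f (f x)) ≤ (a + b) * dist x (f x) := by
  have hcross : b * dist x (f (f x)) ≤ b * (dist x (f x) + dist (f x) (f (f x))) :=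
    mul_le_mul_of_nonneg_left (dist_triangle _ _ _) hb
  have hstep := hf x (f x)
  rw [dist_self, add_zero] at hstep
  linarith

theorem dist_apply_apply_le (hb : 0 ≤ b) (hab : a + b < 1) (hf : KannanChatterjeaWith a b f)
    (x : X) : dist (f x) (f (f x)) ≤ (a + b) / (1 - (a + b)) * dist x (f x) := by
  rw [div_mul_eq_mul_div, le_div_iff₀ (by linarith), mul_comm]
  exact hf.one_sub_mul_dist_apply_apply_le hb x

end KannanChatterjeaWith

theorem kannan_chatterjea_orbit_decay_general
    {X : Type*} [MetricSpace X]
    (f : X → X) (a b : ℝ) (hb : 0 ≤ b) (hab : a + b < 1 / 2)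
    (h : ∀ x y : X, dist (f x) (f y) ≤
      a * (dist x (f x) + dist y (f y)) + b * (dist x (f y) + dist y (f x)))
    (x : ℕ → X) (hx : ∀ n, x (n + 1) = f (x n)) :
    ∀ n, dist (x (n + 1)) (x (n + 2)) ≤
      ((a + b) / (1 - (a + b))) * dist (x n) (x (n + 1)) := by
  intro n
  have hdecay := KannanChatterjeaWith.dist_apply_apply_le (f := f) hb (by linarith) h (x n)
  rw [← hx n, ← hx (n + 1)] at hdecay
  exact hdecay

theorem kannan_chatterjea_orbit_decay
    {X : Type*} [MetricSpace X]
    (f : X → X) (a b : ℝ) (ha : 0 ≤ a) (hb : 0 ≤ b) (hab : a + b < 1 / 2)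
    (h : ∀ x y : X, dist (f x) (f y) ≤
      a * (dist x (f x) + dist y (f y)) + b * (dist x (f y) + dist y (f x)))
    (x : ℕ → X) (hx : ∀ n, x (n + 1) = f (x n)) :
    ∀ n, dist (x (n + 1)) (x (n + 2)) ≤
      ((a + b) / (1 - (a + b))) * dist (x n) (x (n + 1)) :=
  kannan_chatterjea_orbit_decay_general f a b hb hab h x hx
end
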